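/- Let s = √2 and let p = 2 − √2, which is the unique fixed point of the restricted tent map T_s in (0,1). Then T_s maps [0,p] onto [p,1] and maps [p,1] onto [0,p]; the restriction of T_s² to [0,p] is conjugate, via a homeomorphism from [0,p] onto [0,1], to the full tent map T₂, and likewise the restriction of T_s² to [p,1] is conjugate to T₂. Consequently T_{√2} is transitive but not topologically exact. -/

import Mathlib

open Set MeasureTheory

noncomputable section

/-- The unit interval `[0,1]` as a subset of `ℝ`. -/
def I01 : Set ℝ := Set.Icc 0 1

/-- `τ` is piecewise monotonic on `[0,1]`: there is a partition
`0 = a 0 < a 1 < ⋯ < a n = 1` such that `τ` is continuous and strictly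
monotonic on each open interval `(a i, a (i+1))`. -/
def PiecewiseMonotonic (τ : ℝ → ℝ) : Prop :=
  ∃ n : ℕ, 0 < n ∧ ∃ a : ℕ → ℝ, a 0 = 0 ∧ a n = 1 ∧ (∀ i < n, a i < a (i + 1)) ∧
    ∀ i < n, ContinuousOn τ (Set.Ioo (a i) (a (i + 1))) ∧
      (StrictMonoOn τ (Set.Ioo (a i) (a (i + 1))) ∨ StrictAntiOn τ (Set.Ioo (a i) (a (i + 1))))

/-- `τ` is uniformly piecewise linear with slopes `±s`. -/
def UniformlyPiecewiseLinear (τ : ℝ → ℝ) (s : ℝ) : Prop :=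
  ∃ n : ℕ, 0 < n ∧ ∃ a : ℕ → ℝ, a 0 = 0 ∧ a n = 1 ∧ (∀ i < n, a i < a (i + 1)) ∧
    ∀ i < n, ∃ ε : ℝ, (ε = 1 ∨ ε = -1) ∧ ∃ d : ℝ,
      ∀ x ∈ Set.Ioo (a i) (a (i + 1)), τ x = ε * s * x + d

/-- The measure `m` is scaled by `τ` by the factor `s`. -/
def ScaledBy (τ : ℝ → ℝ) (m : Measure ℝ) (s : ℝ) : Prop :=
  ∀ E : Set ℝ, E ⊆ I01 → MeasurableSet E → Set.InjOn τ E →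
    m (τ '' E) = ENNReal.ofReal s * m E

/-- `m` is a Borel probability measure on `[0,1]`. -/
def ProbOnI (m : Measure ℝ) : Prop := IsProbabilityMeasure m ∧ m I01 = 1

/-- `m` has full support in `[0,1]`. -/
def FullSupportOnI (m : Measure ℝ) : Prop :=
  ∀ U : Set ℝ, IsOpen U → (U ∩ I01).Nonempty → 0 < m (U ∩ I01)

/-- `m` is non-atomic. -/
def NonAtomic (m : Measure ℝ) : Prop := ∀ x : ℝ, m {x} = 0

/-- `h` is an increasing homeomorphism of `[0,1]` onto itself. -/
def IncSelfHomeoI (h : ℝ → ℝ) : Prop :=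
  ContinuousOn h I01 ∧ StrictMonoOn h I01 ∧ h '' I01 = I01

/-- `h` is a homeomorphism of `[0,1]` onto itself. -/
def SelfHomeoI (h : ℝ → ℝ) : Prop :=
  ContinuousOn h I01 ∧ Set.BijOn h I01 I01

/-- `τ` is topologically transitive on `K`. -/
def TransitiveOn (τ : ℝ → ℝ) (K : Set ℝ) : Prop :=
  ∀ U V : Set ℝ, IsOpen U → IsOpen V → (U ∩ K).Nonempty → (V ∩ K).Nonempty →
    ∃ n : ℕ, ((τ^[n] '' (U ∩ K)) ∩ (V ∩ K)).Nonempty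

/-- `τ` is topologically mixing on `K`. -/
def MixingOn (τ : ℝ → ℝ) (K : Set ℝ) : Prop :=
  ∀ U V : Set ℝ, IsOpen U → IsOpen V → (U ∩ K).Nonempty → (V ∩ K).Nonempty →
    ∃ N : ℕ, ∀ n ≥ N, ((τ^[n] '' (U ∩ K)) ∩ (V ∩ K)).Nonempty

/-- `τ` is topologically exact on `K`. -/
def ExactOn (τ : ℝ → ℝ) (K : Set ℝ) : Prop :=
  ∀ U : Set ℝ, IsOpen U → (U ∩ K).Nonempty → ∃ n : ℕ, τ^[n] '' (U ∩ K) = K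

/-- `τ` is essentially injective: there are no two disjoint nondegenerate
intervals in `[0,1]` with the same image under `τ`. -/
def EssentiallyInjective (τ : ℝ → ℝ) : Prop :=
  ¬ ∃ a b c d : ℝ, a < b ∧ c < d ∧ Set.Icc a b ⊆ I01 ∧ Set.Icc c d ⊆ I01 ∧
    Disjoint (Set.Icc a b) (Set.Icc c d) ∧ τ '' Set.Icc a b = τ '' Set.Icc c d

/-- The restricted tent map with slopes `±s`. -/
def tent (s : ℝ) (x : ℝ) : ℝ :=
  if x ≤ 1 - 1 / s then 1 + s * (x - (1 - 1 / s)) else 1 - s * (x - (1 - 1 / s))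

/-- `τ` is unimodal. -/
def Unimodal (τ : ℝ → ℝ) : Prop :=
  ContinuousOn τ I01 ∧ ∃ c : ℝ, 0 < c ∧ c < 1 ∧
    StrictMonoOn τ (Set.Icc 0 c) ∧ StrictAntiOn τ (Set.Icc c 1)

/-!
The fixed point `p = 2 - √2` splits `[0,1]` into `[0,p]` and `[p,1]`, which `T = T_√2` exchanges,
so `T²` preserves both. As `T` has slopes `±√2`, `T²` is piecewise affine with slopes `±2` and two
laps on each half, and an affine change of variable turns it into `T₂`. The map `T₂` is exact:
`T₂ⁿ` maps every dyadic interval `[j/2ⁿ, (j+1)/2ⁿ]` onto `[0,1]`. Transported through the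
conjugacies, some iterate of `T` maps a given interval onto one of the halves, and the next iterate
onto the other; this gives transitivity. Exactness fails since the iterates of `T` map `[0,p]`
alternately into `[0,p]` and `[p,1]`.
-/

open Function

theorem bijOn_affine_uIcc {a : ℝ} (ha : a ≠ 0) (b c d : ℝ) :
    BijOn (fun x => a * x + b) (uIcc c d) (uIcc (a * c + b) (a * d + b)) := by
  have himage : (fun x => a * x + b) '' uIcc c d = uIcc (a * c + b) (a * d + b) := by
    rw [← image_add_const_uIcc, ← image_const_mul_uIcc, image_image]
  exact himage ▸ InjOn.bijOn_image fun x _ y _ hxy => by simpa [ha] using hxy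

theorem EqOn.image_Icc_of_affine {f : ℝ → ℝ} {a b c d : ℝ} (ha : 0 < a)
    (hf : EqOn f (fun x => a * x + b) (Icc c d)) : f '' Icc c d = Icc (a * c + b) (a * d + b) :=
  hf.image_eq.trans (image_affine_Icc' ha b c d)

theorem EqOn.image_Icc_of_affine_of_neg {f : ℝ → ℝ} {a b c d : ℝ} (ha : a < 0) (hcd : c ≤ d)
    (hf : EqOn f (fun x => a * x + b) (Icc c d)) : f '' Icc c d = Icc (a * d + b) (a * c + b) := by
  rw [hf.image_eq, ← uIcc_of_le hcd, (bijOn_affine_uIcc ha.ne b c d).image_eq,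
    uIcc_of_ge (by nlinarith)]

theorem tent_of_le {s x : ℝ} (hx : x ≤ 1 - 1 / s) : tent s x = 1 + s * (x - (1 - 1 / s)) :=
  if_pos hx

theorem tent_of_ge {s x : ℝ} (hx : 1 - 1 / s ≤ x) : tent s x = 1 - s * (x - (1 - 1 / s)) := by
  rcases hx.eq_or_lt with rfl | hlt
  · simp [tent]
  · exact if_neg hlt.not_ge

theorem tent_two_of_le_half {x : ℝ} (hx : x ≤ 1 / 2) : tent 2 x = 2 * x := by
  rw [tent_of_le (by norm_num; exact hx)]; ring

theorem tent_two_of_half_le {x : ℝ} (hx : 1 / 2 ≤ x) : tent 2 x = -2 * x + 2 := by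
  rw [tent_of_ge (by norm_num; exact hx)]; ring

theorem tent_two_image_Icc_of_le_half {u v : ℝ} (hv : v ≤ 1 / 2) :
    tent 2 '' Icc u v = Icc (2 * u) (2 * v) := by
  simpa using EqOn.image_Icc_of_affine (b := 0) two_pos
    fun x hx => by simp [tent_two_of_le_half (hx.2.trans hv)]

theorem tent_two_image_Icc_of_half_le {u v : ℝ} (hu : 1 / 2 ≤ u) (huv : u ≤ v) :
    tent 2 '' Icc u v = Icc (-2 * v + 2) (-2 * u + 2) :=
  EqOn.image_Icc_of_affine_of_neg (by norm_num) huv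
    fun x hx => tent_two_of_half_le (hu.trans hx.1)

theorem tent_two_iterate_image_dyadic (n : ℕ) (j : ℤ) (hj₀ : 0 ≤ j) (hjn : j < 2 ^ n) :
    (tent 2)^[n] '' Icc (j / 2 ^ n) ((j + 1) / 2 ^ n) = Icc 0 1 := by
  induction n generalizing j with
  | zero =>
    obtain rfl : j = 0 := by simp at hjn; omega
    simp
  | succ n ih =>
    rw [iterate_succ, image_comp]
    rcases lt_or_ge j (2 ^ n) with hj | hj
    · have hj' : (j : ℝ) + 1 ≤ 2 ^ n := by exact_mod_cast hj
      rw [tent_two_image_Icc_of_le_half, ← ih j hj₀ hj]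
      · congr 2 <;> (rw [pow_succ]; field_simp)
      · rw [pow_succ, div_le_iff₀ (by positivity)]; linarith
    · -- the right half of `[0,1]` is folded back: `j` is reflected to `2 ^ (n + 1) - 1 - j`
      have hj' : (2 : ℝ) ^ n ≤ j := by exact_mod_cast hj
      rw [tent_two_image_Icc_of_half_le, ← ih (2 ^ (n + 1) - 1 - j) (by rw [pow_succ]; omega)
        (by rw [pow_succ]; omega)]
      · push_cast
        congr 2 <;> (rw [pow_succ]; field_simp; ring)
      · rw [pow_succ, le_div_iff₀ (by positivity)]; linarith
      · gcongr; linarith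

theorem tent_two_exists_subset_image_iterate {a b : ℝ} (ha : 0 ≤ a) (hab : a < b) (hb : b ≤ 1) :
    ∃ n, Icc 0 1 ⊆ (tent 2)^[n] '' Icc a b := by
  obtain ⟨n, hn⟩ := pow_unbounded_of_one_lt (2 / (b - a)) one_lt_two
  have h2n : (0 : ℝ) < 2 ^ n := by positivity
  rw [div_lt_iff₀ (by linarith)] at hn
  set j := ⌈a * 2 ^ n⌉
  have hj₁ : a * 2 ^ n ≤ j := Int.le_ceil _
  have hj₂ : (j : ℝ) < a * 2 ^ n + 1 := Int.ceil_lt_add_one _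
  have hjn : (j : ℝ) + 1 < 2 ^ n := by nlinarith
  refine ⟨n, (tent_two_iterate_image_dyadic n j (Int.ceil_nonneg (by positivity))
    (by exact_mod_cast (lt_add_one _).trans hjn)).symm.subset.trans (image_mono ?_)⟩
  apply Icc_subset_Icc
  · rwa [le_div_iff₀ h2n]
  · rw [div_le_iff₀ h2n]; nlinarith

section Semiconj

variable {α β : Type*} {f : α → α} {g : β → β} {h : α → β} {K : Set α}

theorem Set.MapsTo.iterate_semiconj (hf : MapsTo f K K) (hconj : ∀ x ∈ K, h (f x) = g (h x))
    (n : ℕ) : ∀ x ∈ K, h (f^[n] x) = g^[n] (h x) := by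
  induction n with
  | zero => simp
  | succ n ih =>
    intro x hx
    rw [iterate_succ_apply', iterate_succ_apply', hconj _ (hf.iterate n hx), ih x hx]

theorem Set.MapsTo.subset_image_iterate_of_semiconj (hf : MapsTo f K K) (hh : InjOn h K)
    (hconj : ∀ x ∈ K, h (f x) = g (h x)) {J : Set α} (hJ : J ⊆ K) {n : ℕ}
    (hn : h '' K ⊆ g^[n] '' (h '' J)) : K ⊆ f^[n] '' J := by
  intro y hy
  obtain ⟨_, ⟨x, hx, rfl⟩, hxy⟩ := hn (mem_image_of_mem h hy)
  rw [← hf.iterate_semiconj hconj n x (hJ hx)] at hxy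
  exact ⟨x, hx, hh ((hf.iterate n) (hJ hx)) hy hxy⟩

end Semiconj

/-- For compact `K`, such an `h` is a homeomorphism onto `[0,1]`, so this is conjugacy of `f|K`
to `T₂` in the usual sense. -/
def ConjTentTwoOn (f : ℝ → ℝ) (K : Set ℝ) : Prop :=
  ∃ h : ℝ → ℝ, ContinuousOn h K ∧ BijOn h K I01 ∧ ∀ x ∈ K, h (f x) = tent 2 (h x)

theorem ConjTentTwoOn.exists_subset_image_iterate {f : ℝ → ℝ} {K : Set ℝ}
    (hc : ConjTentTwoOn f K) (hf : MapsTo f K K) {a b : ℝ} (hab : a < b) (hJ : Icc a b ⊆ K) :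
    ∃ n, K ⊆ f^[n] '' Icc a b := by
  obtain ⟨h, hcont, hh, hconj⟩ := hc
  have hIVT : uIcc (h a) (h b) ⊆ h '' Icc a b := by
    rw [← uIcc_of_le hab.le]
    exact intermediate_value_uIcc (hcont.mono (by rwa [uIcc_of_le hab.le]))
  have hne : h a ≠ h b := hh.injOn.ne (hJ ⟨le_rfl, hab.le⟩) (hJ ⟨hab.le, le_rfl⟩) hab.ne
  have hmem (x) (hx : x ∈ Icc a b) : h x ∈ Icc (0 : ℝ) 1 := hh.mapsTo (hJ hx)
  obtain ⟨n, hn⟩ := tent_two_exists_subset_image_iterate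
    (le_min (hmem a ⟨le_rfl, hab.le⟩).1 (hmem b ⟨hab.le, le_rfl⟩).1) (min_lt_max.mpr hne)
    (max_le (hmem a ⟨le_rfl, hab.le⟩).2 (hmem b ⟨hab.le, le_rfl⟩).2)
  refine ⟨n, hf.subset_image_iterate_of_semiconj hh.injOn hconj hJ ?_⟩
  rw [hh.image_eq]
  exact hn.trans (image_mono hIVT)

theorem transitiveOn_I01_of_subset_iUnion_image_iterate {f : ℝ → ℝ}
    (hf : ∀ a b : ℝ, 0 ≤ a → a < b → b ≤ 1 → I01 ⊆ ⋃ n, f^[n] '' Icc a b) :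
    TransitiveOn f I01 := by
  rintro U V hU - ⟨x, hxU, hxI⟩ ⟨y, hyV, hyI⟩
  obtain ⟨a, b, hab, hsub⟩ := (hU.inter isOpen_Ioo).exists_Ioo_subset
    (mem_closure_iff.mp (by rwa [closure_Ioo zero_ne_one]) U hU hxU)
  obtain ⟨a', ha', ha'b⟩ := exists_between hab
  obtain ⟨b', ha'b', hb'⟩ := exists_between ha'b
  have hJ : Icc a' b' ⊆ U ∩ Ioo 0 1 := (Icc_subset_Ioo ha' hb').trans hsub
  obtain ⟨n, hn⟩ := mem_iUnion.mp (hf a' b' (hJ ⟨le_rfl, ha'b'.le⟩).2.1.le ha'b'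
    (hJ ⟨ha'b'.le, le_rfl⟩).2.2.le hyI)
  have hJU : Icc a' b' ⊆ U ∩ I01 := fun z hz => ⟨(hJ hz).1, Ioo_subset_Icc_self (hJ hz).2⟩
  exact ⟨n, y, image_mono hJU hn, hyV, hyI⟩

theorem union_image_subset_iUnion_image_iterate {α : Type*} {f : α → α} {K J : Set α} {m : ℕ}
    (hm : K ⊆ f^[m] '' J) : K ∪ f '' K ⊆ ⋃ n, f^[n] '' J := by
  refine union_subset (hm.trans (subset_iUnion_of_subset m subset_rfl)) ?_
  refine (image_mono hm).trans (subset_iUnion_of_subset (m + 1) ?_)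
  rw [← image_comp, ← iterate_succ']

theorem not_exactOn_of_mapsTo_swap {f : ℝ → ℝ} {K A B U : Set ℝ} (hAB : MapsTo f A B)
    (hBA : MapsTo f B A) (hU : IsOpen U) (hUK : (U ∩ K).Nonempty) (hUA : U ∩ K ⊆ A)
    (hA : ¬ K ⊆ A) (hB : ¬ K ⊆ B) : ¬ ExactOn f K := by
  intro hexact
  obtain ⟨n, hn⟩ := hexact U hU hUK
  have hswap : ∀ m : ℕ, MapsTo f^[m] A A ∨ MapsTo f^[m] A B := by
    intro m
    induction m with
    | zero => exact Or.inl (mapsTo_id A)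
    | succ m ih =>
      rw [iterate_succ']
      exact ih.symm.imp hBA.comp hAB.comp
  rcases hswap n with h | h
  · exact hA (hn ▸ (image_mono hUA).trans h.image_subset)
  · exact hB (hn ▸ (image_mono hUA).trans h.image_subset)

theorem sqrt_two_mul_sqrt_two : √2 * √2 = 2 := Real.mul_self_sqrt zero_le_two

theorem one_sub_one_div_sqrt_two : 1 - 1 / √2 = (2 - √2) / 2 := by
  field_simp
  linear_combination sqrt_two_mul_sqrt_two

theorem tent_sqrt_two_of_le {x : ℝ} (hx : x ≤ (2 - √2) / 2) : tent √2 x = √2 * x + (2 - √2) := by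
  rw [tent_of_le (one_sub_one_div_sqrt_two ▸ hx), one_sub_one_div_sqrt_two]
  linear_combination (1 / 2) * sqrt_two_mul_sqrt_two

theorem tent_sqrt_two_of_ge {x : ℝ} (hx : (2 - √2) / 2 ≤ x) : tent √2 x = -√2 * x + √2 := by
  rw [tent_of_ge (one_sub_one_div_sqrt_two ▸ hx), one_sub_one_div_sqrt_two]
  linear_combination (-1 / 2) * sqrt_two_mul_sqrt_two

theorem tent_sqrt_two_eq_self_iff {x : ℝ} (hx : x ∈ Ioo 0 1) : tent √2 x = x ↔ x = 2 - √2 := by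
  have hs₁ : 1 < √2 := Real.one_lt_sqrt_two
  rcases le_or_gt x ((2 - √2) / 2) with hxc | hxc
  · rw [tent_sqrt_two_of_le hxc]
    constructor <;> intro h <;> nlinarith [mul_pos (sub_pos.mpr hs₁) hx.1]
  · rw [tent_sqrt_two_of_ge hxc.le]
    constructor
    · intro h
      have hfactor : (1 + √2) * (x - (2 - √2)) = 0 := by
        linear_combination -h + sqrt_two_mul_sqrt_two
      exact sub_eq_zero.mp ((mul_eq_zero.mp hfactor).resolve_left (by positivity))
    · rintro rfl
      linear_combination sqrt_two_mul_sqrt_two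

theorem tent_sqrt_two_image_Icc_zero : tent √2 '' Icc 0 (2 - √2) = Icc (2 - √2) 1 := by
  have hs₁ : 1 < √2 := Real.one_lt_sqrt_two
  have hs₂ : √2 < 3 / 2 := Real.sqrt_two_lt_three_halves
  have hs : √2 * √2 = 2 := sqrt_two_mul_sqrt_two
  have hleft : tent √2 '' Icc 0 ((2 - √2) / 2) = Icc (2 - √2) 1 := by
    rw [EqOn.image_Icc_of_affine (by positivity) fun x hx => tent_sqrt_two_of_le hx.2]
    congr 1 <;> linarith
  have hright : tent √2 '' Icc ((2 - √2) / 2) (2 - √2) = Icc (2 - √2) 1 := by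
    rw [EqOn.image_Icc_of_affine_of_neg (by linarith) (by linarith)
      fun x hx => tent_sqrt_two_of_ge hx.1]
    congr 1 <;> linarith
  rw [← Icc_union_Icc_eq_Icc (b := (2 - √2) / 2) (by linarith) (by linarith), image_union,
    hleft, hright, union_self]

theorem tent_sqrt_two_image_Icc_one : tent √2 '' Icc (2 - √2) 1 = Icc 0 (2 - √2) := by
  have hs₁ : 1 < √2 := Real.one_lt_sqrt_two
  have hs₂ : √2 < 3 / 2 := Real.sqrt_two_lt_three_halves
  rw [EqOn.image_Icc_of_affine_of_neg (by linarith) (by linarith)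
    fun x hx => tent_sqrt_two_of_ge (by linarith [hx.1])]
  congr 1 <;> linarith [sqrt_two_mul_sqrt_two]

theorem tent_sqrt_two_sq_of_le {x : ℝ} (hx₀ : 0 ≤ x) (hx : x ≤ (2 - √2) / 2) :
    (tent √2)^[2] x = -2 * x + (2 - √2) := by
  have hs₁ : 1 < √2 := Real.one_lt_sqrt_two
  rw [iterate_succ_apply', iterate_one, tent_sqrt_two_of_le hx,
    tent_sqrt_two_of_ge (by nlinarith)]
  linear_combination (1 - x) * sqrt_two_mul_sqrt_two

theorem tent_sqrt_two_sq_of_le_of_le {x : ℝ} (hx₁ : (2 - √2) / 2 ≤ x) (hx₂ : x ≤ (3 - √2) / 2) :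
    (tent √2)^[2] x = 2 * x + (√2 - 2) := by
  rw [iterate_succ_apply', iterate_one, tent_sqrt_two_of_ge hx₁, tent_sqrt_two_of_ge]
  · linear_combination (x - 1) * sqrt_two_mul_sqrt_two
  · nlinarith [sqrt_two_mul_sqrt_two, mul_le_mul_of_nonneg_left hx₂ (Real.sqrt_nonneg 2)]

theorem tent_sqrt_two_sq_of_ge {x : ℝ} (hx : (3 - √2) / 2 ≤ x) :
    (tent √2)^[2] x = -2 * x + (4 - √2) := by
  rw [iterate_succ_apply', iterate_one, tent_sqrt_two_of_ge (x := x) (by linarith),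
    tent_sqrt_two_of_le]
  · linear_combination (1 - x) * sqrt_two_mul_sqrt_two
  · nlinarith [sqrt_two_mul_sqrt_two, mul_le_mul_of_nonneg_left hx (Real.sqrt_nonneg 2)]

theorem conjTentTwoOn_tent_sqrt_two_sq_Icc_zero :
    ConjTentTwoOn (tent √2)^[2] (Icc 0 (2 - √2)) := by
  have hs₁ : 1 < √2 := Real.one_lt_sqrt_two
  have hs₂ : √2 < 3 / 2 := Real.sqrt_two_lt_three_halves
  have hp : 0 < 2 - √2 := by linarith
  refine ⟨fun x => 1 - x / (2 - √2), by fun_prop, ?_, ?_⟩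
  · convert bijOn_affine_uIcc (a := -1 / (2 - √2)) (by positivity) 1 0 (2 - √2) using 1
    · ext x; ring
    · rw [uIcc_of_le hp.le]
    · rw [I01, mul_zero, zero_add, div_mul_cancel₀ _ hp.ne', neg_add_cancel,
        uIcc_of_ge zero_le_one]
  · rintro x ⟨hx₀, hx₁⟩
    beta_reduce
    rcases le_total x ((2 - √2) / 2) with hx | hx
    · have hhx : x / (2 - √2) ≤ 1 / 2 := by rw [div_le_iff₀ hp]; linarith
      rw [tent_sqrt_two_sq_of_le hx₀ hx, tent_two_of_half_le (by linarith)]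
      field_simp; ring
    · have hhx : 1 / 2 ≤ x / (2 - √2) := by rw [le_div_iff₀ hp]; linarith
      rw [tent_sqrt_two_sq_of_le_of_le hx (by linarith), tent_two_of_le_half (by linarith)]
      field_simp; ring

theorem conjTentTwoOn_tent_sqrt_two_sq_Icc_one :
    ConjTentTwoOn (tent √2)^[2] (Icc (2 - √2) 1) := by
  have hs₁ : 1 < √2 := Real.one_lt_sqrt_two
  have hs₂ : √2 < 3 / 2 := Real.sqrt_two_lt_three_halves
  have hq : 0 < √2 - 1 := by linarith
  refine ⟨fun x => (x - (2 - √2)) / (√2 - 1), by fun_prop, ?_, ?_⟩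
  · convert bijOn_affine_uIcc (a := 1 / (√2 - 1)) (by positivity) (-(2 - √2) / (√2 - 1))
      (2 - √2) 1 using 1
    · ext x; ring
    · rw [uIcc_of_le (by linarith)]
    · have hzero : 1 / (√2 - 1) * (2 - √2) + -(2 - √2) / (√2 - 1) = 0 := by ring
      have hone : 1 / (√2 - 1) * 1 + -(2 - √2) / (√2 - 1) = 1 := by field_simp; ring
      rw [I01, hzero, hone, uIcc_of_le zero_le_one]
  · rintro x ⟨hx₀, -⟩
    beta_reduce
    rcases le_total x ((3 - √2) / 2) with hx | hx
    · rw [tent_sqrt_two_sq_of_le_of_le (by linarith) hx,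
        tent_two_of_le_half (by rw [div_le_iff₀ hq]; linarith)]
      field_simp; ring
    · rw [tent_sqrt_two_sq_of_ge hx, tent_two_of_half_le (by rw [le_div_iff₀ hq]; linarith)]
      field_simp; ring

theorem mapsTo_tent_sqrt_two_Icc_zero : MapsTo (tent √2) (Icc 0 (2 - √2)) (Icc (2 - √2) 1) :=
  tent_sqrt_two_image_Icc_zero ▸ mapsTo_image _ _

theorem mapsTo_tent_sqrt_two_Icc_one : MapsTo (tent √2) (Icc (2 - √2) 1) (Icc 0 (2 - √2)) :=
  tent_sqrt_two_image_Icc_one ▸ mapsTo_image _ _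

theorem I01_subset_iUnion_image_iterate_tent_sqrt_two {a b : ℝ} (ha : 0 ≤ a) (hab : a < b)
    (hb : b ≤ 1) : I01 ⊆ ⋃ n, (tent √2)^[n] '' Icc a b := by
  have hs₁ : 1 < √2 := Real.one_lt_sqrt_two
  have hs₂ : √2 < 3 / 2 := Real.sqrt_two_lt_three_halves
  rw [I01, ← Icc_union_Icc_eq_Icc (b := 2 - √2) (by linarith) (by linarith)]
  rcases lt_or_ge a (2 - √2) with hap | hpa
  · obtain ⟨n, hn⟩ := conjTentTwoOn_tent_sqrt_two_sq_Icc_zero.exists_subset_image_iterate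
      (mapsTo_tent_sqrt_two_Icc_one.comp mapsTo_tent_sqrt_two_Icc_zero) (lt_min hab hap)
      (Icc_subset_Icc ha (min_le_right _ _))
    rw [← iterate_mul] at hn
    rw [← tent_sqrt_two_image_Icc_zero]
    exact union_image_subset_iUnion_image_iterate
      (hn.trans (image_mono (Icc_subset_Icc_right (min_le_left _ _))))
  · obtain ⟨n, hn⟩ := conjTentTwoOn_tent_sqrt_two_sq_Icc_one.exists_subset_image_iterate
      (mapsTo_tent_sqrt_two_Icc_zero.comp mapsTo_tent_sqrt_two_Icc_one) hab
      (Icc_subset_Icc hpa hb)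
    rw [← iterate_mul] at hn
    rw [union_comm, ← tent_sqrt_two_image_Icc_one]
    exact union_image_subset_iUnion_image_iterate hn

theorem not_exactOn_tent_sqrt_two : ¬ ExactOn (tent √2) I01 := by
  have hs₁ : 1 < √2 := Real.one_lt_sqrt_two
  have hs₂ : √2 < 3 / 2 := Real.sqrt_two_lt_three_halves
  refine not_exactOn_of_mapsTo_swap mapsTo_tent_sqrt_two_Icc_zero mapsTo_tent_sqrt_two_Icc_one
    (isOpen_Ioo (a := 0) (b := 2 - √2)) ⟨(2 - √2) / 2, ⟨by linarith, by linarith⟩,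
      by linarith, by linarith⟩ (fun x hx => Ioo_subset_Icc_self hx.1) ?_ ?_
  · exact fun h => absurd (h ⟨zero_le_one, le_rfl⟩).2 (by linarith)
  · exact fun h => absurd (h ⟨le_rfl, zero_le_one⟩).1 (by linarith)

theorem transitiveOn_tent_sqrt_two : TransitiveOn (tent √2) I01 :=
  transitiveOn_I01_of_subset_iUnion_image_iterate fun _ _ ha hab hb =>
    I01_subset_iUnion_image_iterate_tent_sqrt_two ha hab hb

/-- For `s = √2` and `p = 2 - √2` (the unique fixed point of `T_s` in `(0,1)`),
`T_s` exchanges `[0,p]` and `[p,1]`, `T_s²` restricted to each of these intervals is conjugate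
to the full tent map `T₂`, and `T_√2` is transitive but not topologically exact. -/
theorem stmt9 :
    (∀ x ∈ Set.Ioo (0 : ℝ) 1, tent (Real.sqrt 2) x = x ↔ x = 2 - Real.sqrt 2) ∧
    tent (Real.sqrt 2) '' Set.Icc 0 (2 - Real.sqrt 2) = Set.Icc (2 - Real.sqrt 2) 1 ∧
    tent (Real.sqrt 2) '' Set.Icc (2 - Real.sqrt 2) 1 = Set.Icc 0 (2 - Real.sqrt 2) ∧
    (∃ h : ℝ → ℝ, ContinuousOn h (Set.Icc 0 (2 - Real.sqrt 2)) ∧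
      Set.BijOn h (Set.Icc 0 (2 - Real.sqrt 2)) I01 ∧
      ∀ x ∈ Set.Icc 0 (2 - Real.sqrt 2),
        h ((tent (Real.sqrt 2))^[2] x) = tent 2 (h x)) ∧
    (∃ h : ℝ → ℝ, ContinuousOn h (Set.Icc (2 - Real.sqrt 2) 1) ∧
      Set.BijOn h (Set.Icc (2 - Real.sqrt 2) 1) I01 ∧
      ∀ x ∈ Set.Icc (2 - Real.sqrt 2) 1,
        h ((tent (Real.sqrt 2))^[2] x) = tent 2 (h x)) ∧
    TransitiveOn (tent (Real.sqrt 2)) I01 ∧ ¬ ExactOn (tent (Real.sqrt 2)) I01 :=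
  ⟨fun _ hx => tent_sqrt_two_eq_self_iff hx, tent_sqrt_two_image_Icc_zero,
    tent_sqrt_two_image_Icc_one, conjTentTwoOn_tent_sqrt_two_sq_Icc_zero,
    conjTentTwoOn_tent_sqrt_two_sq_Icc_one, transitiveOn_tent_sqrt_two, not_exactOn_tent_sqrt_two⟩
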